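/- For every integer m with 2 < m < 2^n and all α ∈ [0,1/2]: ((m−2)/(2m−2))·H_1^n(α) + (m/(2m−2))·H_m^n(α) ≥ H_2^n(α). -/

import Mathlib

/-- Shannon entropy (in bits) of a distribution `p` on a finite type. -/
noncomputable def ent {Ω : Type*} [Fintype Ω] (p : Ω → ℝ) : ℝ :=
  ∑ x, -(p x * Real.logb 2 (p x))

/-- The distribution of `U_S ⊕ Z^n`. -/
noncomputable def bscOut {n : ℕ} (S : Finset (Fin n → Bool)) (α : ℝ)
    (y : Fin n → Bool) : ℝ :=
  (S.card : ℝ)⁻¹ * ∑ x ∈ S, ∏ i, (if y i = x i then 1 - α else α)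

/-- `H_m^n(α)`. -/
noncomputable def Hmn (n m : ℕ) (α : ℝ) : ℝ :=
  sInf {h : ℝ | ∃ S : Finset (Fin n → Bool), S.card = m ∧ h = ent (bscOut S α)}

/-!
In nats, with `h = binEntropy α`, the value `(2 - 2/m)(log 2 - h) + n h` is attained for `m = 1`
by a single point and for `m = 2` by two points differing in one coordinate, and its value at
`m = 2` is exactly the convex combination, with weights `(m-2)/(2m-2)` and `m/(2m-2)`, of its
values at `1` and `m`. So it suffices that every `S` with `|S| = m` has entropy at least this.
That goes by induction on `n`: splitting `S` by its first coordinate into parts `S₀`, `S₁` of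
sizes `a + b = m`, the chain rule and the fact that conditioning on the first input bit decreases
entropy give `H(S) ≥ h((aα + b(1-α))/m) + (a/m) H(S₀) + (b/m) H(S₁)`, and when `a, b ≥ 1`
concavity of `h` bounds the first term below by `(2/m) log 2 + (1 - 2/m) h`.
-/

open Real Finset

noncomputable def entNats {Ω : Type*} [Fintype Ω] (p : Ω → ℝ) : ℝ :=
  ∑ x, negMulLog (p x)

theorem ent_eq_entNats_div_log_two {Ω : Type*} [Fintype Ω] (p : Ω → ℝ) :
    ent p = entNats p / log 2 := by
  simp only [ent, entNats, sum_div, logb, negMulLog]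
  exact sum_congr rfl fun x _ => by ring

section Mixture

variable {ι β γ : Type*} [Fintype ι] [Fintype β] [Fintype γ]

theorem entNats_nonneg_of_sum_eq_one {p : γ → ℝ} (hp0 : ∀ y, 0 ≤ p y)
    (hp1 : ∑ y, p y = 1) : 0 ≤ entNats p :=
  sum_nonneg fun y _ =>
    negMulLog_nonneg (hp0 y) (hp1 ▸ single_le_sum (fun z _ => hp0 z) (mem_univ y))

theorem sum_negMulLog_mul_left (c : ℝ) {p : γ → ℝ} (hp : ∑ y, p y = 1) :
    ∑ y, negMulLog (c * p y) = negMulLog c + c * entNats p := by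
  simp only [negMulLog_mul, sum_add_distrib, ← sum_mul, ← mul_sum, hp, one_mul, entNats]

theorem entNats_prod {p : β → ℝ} {q : γ → ℝ} (hp : ∑ x, p x = 1) (hq : ∑ y, q y = 1) :
    entNats (fun z : β × γ => p z.1 * q z.2) = entNats p + entNats q := by
  simp only [entNats, Fintype.sum_prod_type, sum_negMulLog_mul_left _ hq, sum_add_distrib,
    ← sum_mul, hp, one_mul]

theorem negMulLog_sum_add_sum_mul_entNats_le {r : ι → ℝ} {P : ι → γ → ℝ}
    (hr : ∀ u, 0 ≤ r u) (hP0 : ∀ u y, 0 ≤ P u y)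
    (hP1 : ∀ u, r u ≠ 0 → ∑ y, P u y = 1) :
    negMulLog (∑ u, r u) + ∑ u, r u * entNats (P u) ≤
      entNats (fun y => ∑ u, r u * P u y) := by
  set R := ∑ u, r u
  obtain hR | hR : 0 = R ∨ 0 < R := (sum_nonneg fun u _ => hr u).eq_or_lt
  · have hr0 : ∀ u, r u = 0 := fun u =>
      (sum_eq_zero_iff_of_nonneg fun u _ => hr u).1 hR.symm u (mem_univ u)
    simp [R, hr0, entNats]
  have hw : ∑ u, r u / R = 1 := by rw [← sum_div, div_self hR.ne']
  set t : γ → ℝ := fun y => ∑ u, r u / R * P u y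
  have hmix : ∀ y, ∑ u, r u * P u y = R * t y := fun y => by
    simp only [t, mul_sum]
    exact sum_congr rfl fun u _ => by field_simp
  have hmass : ∀ u, r u / R * ∑ y, P u y = r u / R := fun u => by
    rcases eq_or_ne (r u) 0 with h | h
    · rw [h, zero_div, zero_mul]
    · rw [hP1 u h, mul_one]
  have ht : ∑ y, t y = 1 := by
    simp only [t]
    rw [sum_comm]
    simp only [← mul_sum, hmass, hw]
  have hjensen : ∀ y, ∑ u, r u / R * negMulLog (P u y) ≤ negMulLog (t y) := fun y =>
    concaveOn_negMulLog.le_map_sum (fun u _ => div_nonneg (hr u) hR.le) hw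
      (fun u _ => Set.mem_Ici.2 (hP0 u y))
  calc negMulLog R + ∑ u, r u * entNats (P u)
      = negMulLog R + R * ∑ y, ∑ u, r u / R * negMulLog (P u y) := by
        simp only [entNats, mul_sum]
        rw [sum_comm]
        exact congrArg _ (sum_congr rfl fun u _ => sum_congr rfl fun y _ => by field_simp)
    _ ≤ negMulLog R + R * entNats t := by
        gcongr
        exact sum_le_sum fun y _ => hjensen y
    _ = entNats (fun y => ∑ u, r u * P u y) := by
        simp only [entNats, hmix, sum_negMulLog_mul_left R ht]

/-- Chain rule for `(Y₁, Y₂)` with `Y₂` a mixture over a hidden `U`, combined with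
`H(Y₂ | Y₁) ≥ H(Y₂ | Y₁, U)`. -/
theorem le_entNats_prod_mixture {r : β → ι → ℝ} {P : ι → γ → ℝ}
    (hr : ∀ s u, 0 ≤ r s u) (hP0 : ∀ u y, 0 ≤ P u y)
    (hP1 : ∀ s u, r s u ≠ 0 → ∑ y, P u y = 1) :
    ∑ s, negMulLog (∑ u, r s u) + ∑ u, (∑ s, r s u) * entNats (P u) ≤
      entNats (fun z : β × γ => ∑ u, r z.1 u * P u z.2) := by
  have hslice := fun s => negMulLog_sum_add_sum_mul_entNats_le (hr s) hP0 (hP1 s)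
  simp only [sum_mul, sum_comm (s := (univ : Finset ι)), ← sum_add_distrib]
  unfold entNats at hslice ⊢
  rw [Fintype.sum_prod_type]
  exact sum_le_sum fun s _ => hslice s

end Mixture

section Channel

variable {n : ℕ}

theorem entNats_comp_cons (p : (Fin (n + 1) → Bool) → ℝ) :
    entNats p = entNats fun z : Bool × (Fin n → Bool) => p (Fin.cons z.1 z.2) :=
  ((Fin.consEquiv fun _ => Bool).sum_comp fun x => negMulLog (p x)).symm

def bscKernel (α : ℝ) (y x : Bool) : ℝ := if y = x then 1 - α else α

theorem bscOut_eq (S : Finset (Fin n → Bool)) (α : ℝ) (y : Fin n → Bool) :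
    bscOut S α y = (#S : ℝ)⁻¹ * ∑ x ∈ S, ∏ i, bscKernel α (y i) (x i) := rfl

theorem bscKernel_nonneg {α : ℝ} (hα : α ∈ Set.Icc (0 : ℝ) 1) (y x : Bool) :
    0 ≤ bscKernel α y x := by
  unfold bscKernel; split <;> linarith [hα.1, hα.2]

theorem sum_bscKernel (α : ℝ) (x : Bool) : ∑ y, bscKernel α y x = 1 := by
  cases x <;> simp [bscKernel]

theorem bscKernel_false_add_true (α : ℝ) (y : Bool) :
    bscKernel α y false + bscKernel α y true = 1 := by
  cases y <;> simp [bscKernel]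

theorem bscOut_nonneg {α : ℝ} (hα : α ∈ Set.Icc (0 : ℝ) 1) (S : Finset (Fin n → Bool))
    (y : Fin n → Bool) : 0 ≤ bscOut S α y :=
  mul_nonneg (by positivity)
    (sum_nonneg fun x _ => prod_nonneg fun i _ => bscKernel_nonneg hα _ _)

theorem sum_bscOut {S : Finset (Fin n → Bool)} (hS : S.Nonempty) (α : ℝ) :
    ∑ y, bscOut S α y = 1 := by
  have hx (x : Fin n → Bool) : ∑ y : Fin n → Bool, ∏ i, bscKernel α (y i) (x i) = 1 := by
    rw [← Fintype.prod_sum (fun i b => bscKernel α b (x i))]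
    exact prod_eq_one fun i _ => sum_bscKernel α (x i)
  simp only [bscOut_eq, ← mul_sum]
  rw [sum_comm]
  simp only [hx, sum_const, nsmul_eq_mul, mul_one]
  exact inv_mul_cancel₀ (by exact_mod_cast hS.card_pos.ne')

theorem card_mul_bscOut (T : Finset (Fin n → Bool)) (α : ℝ) (y : Fin n → Bool) :
    (#T : ℝ) * bscOut T α y = ∑ x ∈ T, ∏ i, bscKernel α (y i) (x i) := by
  rcases T.eq_empty_or_nonempty with rfl | hT
  · simp
  · rw [bscOut_eq, mul_inv_cancel_left₀ (by exact_mod_cast hT.card_pos.ne')]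

def headSlice (S : Finset (Fin (n + 1) → Bool)) (u : Bool) : Finset (Fin n → Bool) :=
  {x ∈ S | x 0 = u}.image Fin.tail

theorem injOn_tail_filter_head_eq (S : Finset (Fin (n + 1) → Bool)) (u : Bool) :
    Set.InjOn Fin.tail (SetLike.coe {x ∈ S | x 0 = u}) := fun x hx x' hx' h =>
  Fin.cons_self_tail x ▸ Fin.cons_self_tail x' ▸ by
    rw [(mem_filter.1 hx).2, (mem_filter.1 hx').2, h]

theorem card_headSlice (S : Finset (Fin (n + 1) → Bool)) (u : Bool) :
    #(headSlice S u) = #{x ∈ S | x 0 = u} :=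
  card_image_of_injOn (injOn_tail_filter_head_eq S u)

theorem card_headSlice_add (S : Finset (Fin (n + 1) → Bool)) :
    #(headSlice S false) + #(headSlice S true) = #S := by
  simpa [card_headSlice] using card_filter_add_card_filter_not (s := S) (fun x => x 0 = false)

theorem bscOut_cons (S : Finset (Fin (n + 1) → Bool)) (α : ℝ) (s : Bool) (y : Fin n → Bool) :
    bscOut S α (Fin.cons s y) =
      ∑ u, (#(headSlice S u) / #S : ℝ) * bscKernel α s u * bscOut (headSlice S u) α y := by
  have hslice : ∀ u, ∑ x ∈ S with x 0 = u,
      ∏ i, bscKernel α ((Fin.cons s y : Fin (n + 1) → Bool) i) (x i) =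
        bscKernel α s u * (#(headSlice S u) * bscOut (headSlice S u) α y) := fun u => by
    rw [card_mul_bscOut, headSlice, sum_image (injOn_tail_filter_head_eq S u), mul_sum]
    refine sum_congr rfl fun x hx => ?_
    rw [Fin.prod_univ_succ, Fin.cons_zero, (mem_filter.1 hx).2]
    rfl
  rw [bscOut_eq, ← sum_fiberwise S (fun x => x 0), mul_sum]
  refine sum_congr rfl fun u _ => ?_
  rw [hslice]
  ring

theorem le_entNats_bscOut {α : ℝ} (hα : α ∈ Set.Icc (0 : ℝ) 1)
    {S : Finset (Fin (n + 1) → Bool)} (hS : S.Nonempty) :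
    binEntropy ((#(headSlice S false) * α + #(headSlice S true) * (1 - α)) / #S) +
        #(headSlice S false) / #S * entNats (bscOut (headSlice S false) α) +
        #(headSlice S true) / #S * entNats (bscOut (headSlice S true) α) ≤
      entNats (bscOut S α) := by
  have hab : (#(headSlice S false) + #(headSlice S true) : ℝ) = #S := by
    exact_mod_cast card_headSlice_add S
  have hS0 : (#S : ℝ) ≠ 0 := by exact_mod_cast hS.card_pos.ne'
  set r : Bool → Bool → ℝ := fun s u => #(headSlice S u) / #S * bscKernel α s u
  have hjoint : entNats (bscOut S α) = entNats fun z : Bool × (Fin n → Bool) =>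
      ∑ u, r z.1 u * bscOut (headSlice S u) α z.2 := by
    simp only [entNats_comp_cons, r, ← bscOut_cons]
  have hmix := le_entNats_prod_mixture (r := r) (P := fun u => bscOut (headSlice S u) α)
    (fun s u => mul_nonneg (by positivity) (bscKernel_nonneg hα s u))
    (fun u y => bscOut_nonneg hα _ y)
    (fun s u hr => sum_bscOut (card_pos.1 (Nat.pos_of_ne_zero fun h => hr (by simp [r, h]))) α)
  refine hjoint ▸ le_trans (le_of_eq ?_) hmix
  rw [binEntropy_eq_negMulLog_add_negMulLog_one_sub]
  simp only [r, Fintype.sum_bool, bscKernel, if_true, Bool.true_eq_false, Bool.false_eq_true,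
    if_false]
  generalize (#(headSlice S false) : ℝ) = a, (#(headSlice S true) : ℝ) = b, (#S : ℝ) = m at *
  have hcompl : 1 - (a * α + b * (1 - α)) / m = b / m * α + a / m * (1 - α) := by
    field_simp
    linear_combination -hab
  rw [hcompl, show (a * α + b * (1 - α)) / m = b / m * (1 - α) + a / m * α by ring]
  ring

noncomputable def bscEntropyBound (n m : ℕ) (α : ℝ) : ℝ :=
  (2 - 2 / m) * (log 2 - binEntropy α) + n * binEntropy α

theorem log_two_mul_add_binEntropy_le {α a b : ℝ} (hα : α ∈ Set.Icc (0 : ℝ) 1)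
    (ha : 1 ≤ a) (hb : 1 ≤ b) :
    2 / (a + b) * log 2 + (1 - 2 / (a + b)) * binEntropy α ≤
      binEntropy ((a * α + b * (1 - α)) / (a + b)) := by
  wlog hba : b ≤ a generalizing a b
  · have hswap : (a * α + b * (1 - α)) / (a + b) = 1 - (b * α + a * (1 - α)) / (b + a) := by
      field_simp
      ring
    rw [hswap, binEntropy_one_sub, add_comm a b]
    exact this hb ha (le_of_not_ge hba)
  have hab : 0 < a + b := by linarith
  set t := b / (a + b)
  have ht : 2 * t ≤ 1 := by rw [mul_div_assoc', div_le_one hab]; linarith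
  have hmix : (a * α + b * (1 - α)) / (a + b) = (1 - 2 * t) * α + 2 * t * 2⁻¹ := by
    simp only [t]
    field_simp
    ring
  have hconc := strictConcave_binEntropy.concaveOn.2 hα
    (by norm_num : (2 : ℝ)⁻¹ ∈ Set.Icc (0 : ℝ) 1) (by linarith : 0 ≤ 1 - 2 * t)
    (by positivity : 0 ≤ 2 * t) (by ring)
  simp only [smul_eq_mul, binEntropy_two_inv] at hconc
  have h2t : 2 / (a + b) ≤ 2 * t := by
    rw [mul_div_assoc']
    exact div_le_div_of_nonneg_right (by linarith) hab.le
  have hgap := mul_nonneg (sub_nonneg.2 h2t) (sub_nonneg.2 (binEntropy_le_log_two (p := α)))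
  rw [hmix]
  linarith

theorem bscEntropyBound_succ_le {a b m : ℕ} (hm : a + b = m) (hm0 : 0 < m) {α : ℝ}
    (hα : α ∈ Set.Icc (0 : ℝ) 1) {H₀ H₁ : ℝ} (h₀ : 0 < a → bscEntropyBound n a α ≤ H₀)
    (h₁ : 0 < b → bscEntropyBound n b α ≤ H₁) :
    bscEntropyBound (n + 1) m α ≤
      binEntropy ((a * α + b * (1 - α)) / m) + a / m * H₀ + b / m * H₁ := by
  subst hm
  rcases Nat.eq_zero_or_pos a with rfl | ha
  · have hb : (b : ℝ) ≠ 0 := by simp only [zero_add] at hm0; positivity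
    simp only [zero_add, Nat.cast_zero, zero_mul, zero_div, mul_div_cancel_left₀ _ hb,
      binEntropy_one_sub, div_self hb, one_mul] at h₁ ⊢
    have := h₁ (by simpa using hm0)
    simp only [bscEntropyBound, Nat.cast_add, Nat.cast_one] at this ⊢
    linarith
  rcases Nat.eq_zero_or_pos b with rfl | hb
  · have ha' : (a : ℝ) ≠ 0 := by positivity
    simp only [add_zero, Nat.cast_zero, zero_mul, zero_div, mul_div_cancel_left₀ _ ha',
      div_self ha', one_mul] at h₀ ⊢
    have := h₀ ha
    simp only [bscEntropyBound, Nat.cast_add, Nat.cast_one] at this ⊢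
    linarith
  have ha1 : (1 : ℝ) ≤ a := by exact_mod_cast ha
  have hb1 : (1 : ℝ) ≤ b := by exact_mod_cast hb
  have hmarg := log_two_mul_add_binEntropy_le hα ha1 hb1
  have hA := mul_le_mul_of_nonneg_left (h₀ ha) (by positivity : (0 : ℝ) ≤ a / (a + b))
  have hB := mul_le_mul_of_nonneg_left (h₁ hb) (by positivity : (0 : ℝ) ≤ b / (a + b))
  have hid : bscEntropyBound (n + 1) (a + b) α = 2 / (a + b) * log 2 +
      (1 - 2 / (a + b)) * binEntropy α + a / (a + b) * bscEntropyBound n a α +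
      b / (a + b) * bscEntropyBound n b α := by
    simp only [bscEntropyBound]
    push_cast
    field_simp
    ring
  push_cast
  linarith

theorem bscEntropyBound_le_entNats {α : ℝ} (hα : α ∈ Set.Icc (0 : ℝ) 1) :
    ∀ {n : ℕ} {S : Finset (Fin n → Bool)}, S.Nonempty →
      bscEntropyBound n #S α ≤ entNats (bscOut S α)
  | 0, S, hS => by
    have hcard : #S = 1 := le_antisymm (card_le_univ S |>.trans (by simp)) hS.card_pos
    simpa [bscEntropyBound, hcard] using
      entNats_nonneg_of_sum_eq_one (bscOut_nonneg hα S) (sum_bscOut hS α)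
  | n + 1, S, hS =>
    (bscEntropyBound_succ_le (card_headSlice_add S) hS.card_pos hα
      (fun h => bscEntropyBound_le_entNats hα (card_pos.1 h))
      (fun h => bscEntropyBound_le_entNats hα (card_pos.1 h))).trans
      (le_entNats_bscOut hα hS)

theorem entNats_bscKernel (α : ℝ) (x : Bool) :
    entNats (fun y => bscKernel α y x) = binEntropy α := by
  cases x <;> simp [entNats, bscKernel, binEntropy_eq_negMulLog_add_negMulLog_one_sub, add_comm]

theorem bscOut_singleton (x : Fin n → Bool) (α : ℝ) (y : Fin n → Bool) :
    bscOut {x} α y = ∏ i, bscKernel α (y i) (x i) := by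
  simp [bscOut_eq]

theorem entNats_bscOut_singleton (α : ℝ) :
    ∀ {n : ℕ} (x : Fin n → Bool), entNats (bscOut {x} α) = n * binEntropy α
  | 0, x => by simp [entNats, bscOut_singleton]
  | n + 1, x => by
    have hprod : ∀ z : Bool × (Fin n → Bool), bscOut {x} α (Fin.cons z.1 z.2) =
        bscKernel α z.1 (x 0) * bscOut {Fin.tail x} α z.2 := fun z => by
      simp only [bscOut_singleton, Fin.prod_univ_succ, Fin.cons_zero, Fin.cons_succ]
      rfl
    rw [entNats_comp_cons, funext hprod,
      entNats_prod (sum_bscKernel α _) (sum_bscOut (singleton_nonempty _) α),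
      entNats_bscKernel, entNats_bscOut_singleton]
    push_cast
    ring

theorem entNats_bscOut_pair (x : Fin n → Bool) (α : ℝ) :
    entNats (bscOut {Fin.cons false x, Fin.cons true x} α) = log 2 + n * binEntropy α := by
  have hprod : ∀ z : Bool × (Fin n → Bool),
      bscOut {Fin.cons false x, Fin.cons true x} α (Fin.cons z.1 z.2) =
        (2⁻¹ : ℝ) * bscOut {x} α z.2 := fun z => by
    rw [bscOut_eq, card_pair (by simp), sum_pair (by simp), bscOut_singleton]
    simp only [Fin.prod_univ_succ, Fin.cons_zero, Fin.cons_succ, ← add_mul,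
      bscKernel_false_add_true, one_mul, Nat.cast_ofNat]
  rw [entNats_comp_cons, funext hprod,
    entNats_prod (p := fun _ : Bool => (2⁻¹ : ℝ)) (by norm_num)
      (sum_bscOut (singleton_nonempty _) α),
    entNats_bscOut_singleton]
  simp [entNats, negMulLog, log_inv]

theorem bscEntropyBound_div_log_two_le_ent {α : ℝ} (hα : α ∈ Set.Icc (0 : ℝ) 1)
    {S : Finset (Fin n → Bool)} (hS : S.Nonempty) :
    bscEntropyBound n #S α / log 2 ≤ ent (bscOut S α) := by
  rw [ent_eq_entNats_div_log_two]
  exact div_le_div_of_nonneg_right (bscEntropyBound_le_entNats hα hS) (log_nonneg one_le_two)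

theorem bscEntropyBound_div_log_two_le_Hmn {k : ℕ} {α : ℝ} (hα : α ∈ Set.Icc (0 : ℝ) 1)
    (hk : 0 < k) (hkn : k ≤ 2 ^ n) : bscEntropyBound n k α / log 2 ≤ Hmn n k α := by
  obtain ⟨S, -, hS⟩ := exists_subset_card_eq (s := (univ : Finset (Fin n → Bool))) (by simpa)
  refine le_csInf ⟨_, S, hS, rfl⟩ ?_
  rintro _ ⟨T, rfl, rfl⟩
  exact bscEntropyBound_div_log_two_le_ent hα (card_pos.1 hk)

theorem Hmn_le_ent {α : ℝ} (hα : α ∈ Set.Icc (0 : ℝ) 1)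
    {S : Finset (Fin n → Bool)} (hS : S.Nonempty) : Hmn n #S α ≤ ent (bscOut S α) := by
  refine csInf_le ⟨bscEntropyBound n #S α / log 2, ?_⟩ ⟨S, rfl, rfl⟩
  rintro _ ⟨T, hT, rfl⟩
  exact hT ▸ bscEntropyBound_div_log_two_le_ent hα (card_pos.1 (hT ▸ hS.card_pos))

theorem Hmn_two_le {α : ℝ} (hα : α ∈ Set.Icc (0 : ℝ) 1) :
    Hmn (n + 1) 2 α ≤ bscEntropyBound (n + 1) 2 α / log 2 := by
  have hpair : #{(Fin.cons false 0 : Fin (n + 1) → Bool), Fin.cons true 0} = 2 :=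
    card_pair (by simp)
  refine (hpair ▸ Hmn_le_ent hα (insert_nonempty _ _)).trans_eq ?_
  rw [ent_eq_entNats_div_log_two, entNats_bscOut_pair, bscEntropyBound]
  push_cast
  ring

theorem bscEntropyBound_two_eq {m : ℕ} (hm : 1 < m) (α : ℝ) :
    bscEntropyBound n 2 α = ((m : ℝ) - 2) / (2 * m - 2) * bscEntropyBound n 1 α +
      (m : ℝ) / (2 * m - 2) * bscEntropyBound n m α := by
  have hm' : (1 : ℝ) < m := by exact_mod_cast hm
  have : (m - 1 : ℝ) ≠ 0 := by linarith
  have : (m : ℝ) ≠ 0 := by linarith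
  simp only [bscEntropyBound]
  field_simp
  ring

end Channel

theorem key_convexity_bound (n m : ℕ) (hm : 2 < m) (hm' : m < 2 ^ n)
    (α : ℝ) (hα : α ∈ Set.Icc (0:ℝ) (1/2)) :
    Hmn n 2 α ≤ ((m : ℝ) - 2) / (2 * m - 2) * Hmn n 1 α +
      (m : ℝ) / (2 * m - 2) * Hmn n m α := by
  obtain ⟨k, rfl⟩ : ∃ k, n = k + 1 :=
    Nat.exists_eq_succ_of_ne_zero (by rintro rfl; simp at hm'; omega)
  have hα' : α ∈ Set.Icc (0 : ℝ) 1 := ⟨hα.1, hα.2.trans (by norm_num)⟩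
  have hm2 : (2 : ℝ) < m := by exact_mod_cast hm
  calc Hmn (k + 1) 2 α ≤ bscEntropyBound (k + 1) 2 α / log 2 := Hmn_two_le hα'
    _ = ((m : ℝ) - 2) / (2 * m - 2) * (bscEntropyBound (k + 1) 1 α / log 2) +
          (m : ℝ) / (2 * m - 2) * (bscEntropyBound (k + 1) m α / log 2) := by
        rw [bscEntropyBound_two_eq (by omega : 1 < m)]
        ring
    _ ≤ _ := add_le_add
        (mul_le_mul_of_nonneg_left
          (bscEntropyBound_div_log_two_le_Hmn hα' one_pos Nat.one_le_two_pow)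
          (div_nonneg (by linarith) (by linarith)))
        (mul_le_mul_of_nonneg_left
          (bscEntropyBound_div_log_two_le_Hmn hα' (by omega) hm'.le)
          (div_nonneg (by linarith) (by linarith)))
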